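/- arXiv:0709.0478 — 2 statements merged into one kernel-verified Lean document; each statement's English description precedes it below -/
import Mathlib

section
/- Let ω(u,v) = Im ∫_ℝ u conj(v) and η = sech. Set e₁η = -η', e₂η = i x η, e₃η = i η, e₄η = (xη)'. Then ω(e₂η, e₁η) = 1, ω(e₃η, e₄η) = 1, and ω(eᵢη, eⱼη) = 0 for all other pairs i < j (and the form is antisymmetric). -/
/-!
Since `sech` is even, `sech' = -sech * tanh` is odd, `x * sech x` is odd and its derivative
`sech x * (1 - x * tanh x)` is even. The generators `E1`, `E4` are real and `E2`, `E3` purely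
imaginary, so `ω` vanishes on two generators of the same kind, and a mixed pair reduces to a real
integral `∫ f g`; for `(E3, E1)` and `(E2, E4)` the integrand is odd. The two remaining integrals
are even, hence twice their value on `(0, ∞)`, which the antiderivatives `tanh` of `sech ^ 2` and
`(tanh x - x * sech x ^ 2) / 2` of `x * sech x ^ 2 * tanh x` give as `1` and `1 / 2`. Antisymmetry
of `ω` gives the other half of the table.
-/

open Complex

noncomputable def sech (x : ℝ) : ℝ := 1 / Real.cosh x

/-- The symplectic form ω(u,v) = Im ∫ u conj(v). -/
noncomputable def symp (u v : ℝ → ℂ) : ℝ :=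
  (∫ x : ℝ, u x * (starRingEnd ℂ) (v x)).im

noncomputable def E1 : ℝ → ℂ := fun x => -Complex.ofReal (deriv sech x)
noncomputable def E2 : ℝ → ℂ := fun x => Complex.I * x * (sech x : ℂ)
noncomputable def E3 : ℝ → ℂ := fun x => Complex.I * (sech x : ℂ)
noncomputable def E4 : ℝ → ℂ := fun x => Complex.ofReal (deriv (fun y => y * sech y) x)

open MeasureTheory Filter Set Topology ComplexConjugate

theorem Function.Even.integral_eq_two_mul_integral_Ioi {f : ℝ → ℝ} (hf : f.Even) :
    ∫ x, f x = 2 * ∫ x in Ioi 0, f x := by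
  have habs (x : ℝ) : f |x| = f x := by
    rcases abs_choice x with h | h <;> simp only [h, hf x]
  simpa only [habs] using integral_comp_abs (f := f)

theorem Function.Odd.integral_eq_zero {E : Type*} [NormedAddCommGroup E] [NormedSpace ℝ E]
    {f : ℝ → E} (hf : f.Odd) : ∫ x, f x = 0 := by
  have h := integral_neg_eq_self f volume
  simp only [hf _, integral_neg] at h
  have h2 : (2 : ℝ) • ∫ x, f x = 0 := by
    rw [two_smul]
    nth_rewrite 1 [← h]
    exact neg_add_cancel _
  exact (smul_eq_zero.mp h2).resolve_left two_ne_zero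

lemma symp_swap (u v : ℝ → ℂ) : symp v u = -symp u v := by
  have h (x : ℝ) : v x * conj (u x) = conj (u x * conj (v x)) := by
    rw [map_mul, conj_conj, mul_comm]
  simp only [symp, h, integral_conj, conj_im]

lemma symp_I_mul_I_mul (u v : ℝ → ℂ) :
    symp (fun x => I * u x) (fun x => I * v x) = symp u v := by
  have h (x : ℝ) : I * u x * conj (I * v x) = u x * conj (v x) := by
    rw [map_mul, conj_I]
    linear_combination -(u x * conj (v x)) * I_sq
  simp only [symp, h]

lemma symp_ofReal_ofReal (f g : ℝ → ℝ) : symp (fun x => f x) (fun x => g x) = 0 := by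
  simp only [symp, conj_ofReal, ← ofReal_mul, integral_complex_ofReal, ofReal_im]

lemma symp_I_mul_ofReal (f g : ℝ → ℝ) :
    symp (fun x => I * f x) (fun x => g x) = ∫ x, f x * g x := by
  simp only [symp, conj_ofReal, mul_assoc, ← ofReal_mul, integral_const_mul,
    integral_complex_ofReal, mul_im, I_re, I_im, ofReal_re, ofReal_im]
  ring

lemma sech_pos (x : ℝ) : 0 < sech x := by
  unfold sech
  positivity

lemma sech_le_one (x : ℝ) : sech x ≤ 1 := by
  rw [sech, div_le_one (Real.cosh_pos x)]
  exact Real.one_le_cosh x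

lemma sech_le_two_mul_exp_neg (x : ℝ) : sech x ≤ 2 * Real.exp (-x) := by
  have hcosh : Real.exp x / 2 ≤ Real.cosh x := by
    rw [Real.cosh_eq]
    linarith [Real.exp_pos (-x)]
  calc sech x ≤ 1 / (Real.exp x / 2) := by
        unfold sech
        gcongr
    _ = 2 * Real.exp (-x) := by rw [Real.exp_neg]; field_simp

lemma sech_neg (x : ℝ) : sech (-x) = sech x := by simp [sech]

lemma hasDerivAt_sech (x : ℝ) : HasDerivAt sech (-(sech x * Real.tanh x)) x := by
  have h := (Real.hasDerivAt_cosh x).inv (Real.cosh_pos x).ne'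
  rw [show Real.cosh⁻¹ = sech from funext fun y => (one_div _).symm] at h
  refine h.congr_deriv ?_
  unfold sech
  rw [Real.tanh_eq_sinh_div_cosh]
  field_simp

lemma deriv_sech (x : ℝ) : deriv sech x = -(sech x * Real.tanh x) :=
  (hasDerivAt_sech x).deriv

lemma deriv_mul_sech (x : ℝ) :
    deriv (fun y => y * sech y) x = sech x * (1 - x * Real.tanh x) := by
  have h : HasDerivAt (fun y => y * sech y) _ x := (hasDerivAt_id' x).mul (hasDerivAt_sech x)
  rw [h.deriv]
  ring

lemma hasDerivAt_tanh (x : ℝ) : HasDerivAt Real.tanh (sech x ^ 2) x := by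
  have h := (Real.hasDerivAt_sinh x).div (Real.hasDerivAt_cosh x) (Real.cosh_pos x).ne'
  rw [show Real.sinh / Real.cosh = Real.tanh from
    funext fun y => (Real.tanh_eq_sinh_div_cosh y).symm] at h
  refine h.congr_deriv ?_
  unfold sech
  rw [← sq, ← sq, Real.cosh_sq_sub_sinh_sq, one_div_pow]

lemma tanh_eq_one_sub_sech_mul_exp_neg (x : ℝ) : Real.tanh x = 1 - sech x * Real.exp (-x) := by
  rw [← Real.cosh_sub_sinh, Real.tanh_eq_sinh_div_cosh]
  unfold sech
  field_simp
  ring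

lemma tendsto_tanh_atTop : Tendsto Real.tanh atTop (𝓝 1) := by
  have h : Tendsto (fun x => sech x * Real.exp (-x)) atTop (𝓝 0) :=
    squeeze_zero (fun x => (mul_pos (sech_pos x) (Real.exp_pos _)).le)
      (fun x => mul_le_of_le_one_left (Real.exp_pos _).le (sech_le_one x))
      Real.tendsto_exp_neg_atTop_nhds_zero
  rw [funext tanh_eq_one_sub_sech_mul_exp_neg]
  simpa using h.const_sub 1

lemma tendsto_mul_sech_sq_atTop : Tendsto (fun x => x * sech x ^ 2) atTop (𝓝 0) := by
  have h := (Real.tendsto_pow_mul_exp_neg_atTop_nhds_zero 1).const_mul 2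
  rw [mul_zero] at h
  refine squeeze_zero' ?_ ?_ h <;> filter_upwards [eventually_ge_atTop 0] with x hx
  · positivity
  · calc x * sech x ^ 2 ≤ x * sech x := by gcongr; exact sq_le (sech_pos x).le (sech_le_one x)
      _ ≤ x * (2 * Real.exp (-x)) := by gcongr; exact sech_le_two_mul_exp_neg x
      _ = 2 * (x ^ 1 * Real.exp (-x)) := by ring

lemma integrableOn_Ioi_sech_sq : IntegrableOn (fun x => sech x ^ 2) (Ioi 0) :=
  integrableOn_Ioi_deriv_of_nonneg' (fun x _ => hasDerivAt_tanh x) (fun _ _ => sq_nonneg _)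
    tendsto_tanh_atTop

lemma integral_Ioi_sech_sq : ∫ x in Ioi 0, sech x ^ 2 = 1 := by
  rw [integral_Ioi_of_hasDerivAt_of_tendsto' (fun x _ => hasDerivAt_tanh x)
    integrableOn_Ioi_sech_sq tendsto_tanh_atTop, Real.tanh_zero, sub_zero]

lemma hasDerivAt_tanh_sub_mul_sech_sq (x : ℝ) :
    HasDerivAt (fun y => (Real.tanh y - y * sech y ^ 2) / 2) (x * sech x ^ 2 * Real.tanh x) x := by
  have h :=
    ((hasDerivAt_tanh x).sub ((hasDerivAt_id' x).mul ((hasDerivAt_sech x).pow 2))).div_const 2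
  refine h.congr_deriv ?_
  simp only [Pi.pow_apply]
  ring

lemma tendsto_tanh_sub_mul_sech_sq_atTop :
    Tendsto (fun y => (Real.tanh y - y * sech y ^ 2) / 2) atTop (𝓝 (1 / 2)) := by
  simpa using (tendsto_tanh_atTop.sub tendsto_mul_sech_sq_atTop).div_const 2

lemma integrableOn_Ioi_mul_sech_sq_mul_tanh :
    IntegrableOn (fun x => x * sech x ^ 2 * Real.tanh x) (Ioi 0) := by
  refine integrableOn_Ioi_deriv_of_nonneg' (fun x _ => hasDerivAt_tanh_sub_mul_sech_sq x)
    (fun x (hx : 0 < x) => ?_) tendsto_tanh_sub_mul_sech_sq_atTop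
  have htanh : 0 < Real.tanh x := by
    rw [Real.tanh_eq_sinh_div_cosh]
    exact div_pos (Real.sinh_pos_iff.mpr hx) (Real.cosh_pos x)
  positivity

lemma integral_Ioi_mul_sech_sq_mul_tanh : ∫ x in Ioi 0, x * sech x ^ 2 * Real.tanh x = 1 / 2 := by
  rw [integral_Ioi_of_hasDerivAt_of_tendsto' (fun x _ => hasDerivAt_tanh_sub_mul_sech_sq x)
    integrableOn_Ioi_mul_sech_sq_mul_tanh tendsto_tanh_sub_mul_sech_sq_atTop]
  simp

lemma integral_mul_sech_sq_mul_tanh : ∫ x, x * sech x ^ 2 * Real.tanh x = 1 := by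
  rw [Function.Even.integral_eq_two_mul_integral_Ioi
    (fun x => by simp only [sech_neg, Real.tanh_neg]; ring), integral_Ioi_mul_sech_sq_mul_tanh]
  norm_num

lemma integral_sech_sq_mul_one_sub_mul_tanh : ∫ x, sech x ^ 2 * (1 - x * Real.tanh x) = 1 := by
  have hIoi : ∫ x in Ioi 0, sech x ^ 2 * (1 - x * Real.tanh x) =
      (∫ x in Ioi 0, sech x ^ 2) - ∫ x in Ioi 0, x * sech x ^ 2 * Real.tanh x := by
    rw [← integral_sub integrableOn_Ioi_sech_sq integrableOn_Ioi_mul_sech_sq_mul_tanh]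
    congr 1 with x
    ring
  rw [Function.Even.integral_eq_two_mul_integral_Ioi
    (fun x => by simp only [sech_neg, Real.tanh_neg]; ring), hIoi, integral_Ioi_sech_sq,
    integral_Ioi_mul_sech_sq_mul_tanh]
  norm_num

lemma E1_eq : E1 = fun x => ((sech x * Real.tanh x : ℝ) : ℂ) := by
  funext x
  simp [E1, deriv_sech]

lemma E2_eq : E2 = fun x => I * ((x * sech x : ℝ) : ℂ) := by
  funext x
  simp [E2, mul_assoc]

lemma E4_eq : E4 = fun x => ((sech x * (1 - x * Real.tanh x) : ℝ) : ℂ) := by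
  funext x
  simp [E4, deriv_mul_sech]

theorem symplectic_form_on_soliton_manifold :
    symp E2 E1 = 1 ∧ symp E3 E4 = 1 ∧
    symp E1 E2 = -1 ∧ symp E4 E3 = -1 ∧
    symp E1 E3 = 0 ∧ symp E3 E1 = 0 ∧
    symp E1 E4 = 0 ∧ symp E4 E1 = 0 ∧
    symp E2 E3 = 0 ∧ symp E3 E2 = 0 ∧
    symp E2 E4 = 0 ∧ symp E4 E2 = 0 := by
  have h21 : symp E2 E1 = 1 := by
    rw [E2_eq, E1_eq, symp_I_mul_ofReal]
    convert integral_mul_sech_sq_mul_tanh using 3 with x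
    ring
  have h34 : symp E3 E4 = 1 := by
    unfold E3
    rw [E4_eq, symp_I_mul_ofReal]
    convert integral_sech_sq_mul_one_sub_mul_tanh using 3 with x
    ring
  have h31 : symp E3 E1 = 0 := by
    unfold E3
    rw [E1_eq, symp_I_mul_ofReal]
    exact Function.Odd.integral_eq_zero fun x => by simp only [sech_neg, Real.tanh_neg]; ring
  have h24 : symp E2 E4 = 0 := by
    rw [E2_eq, E4_eq, symp_I_mul_ofReal]
    exact Function.Odd.integral_eq_zero fun x => by simp only [sech_neg, Real.tanh_neg]; ring
  have h14 : symp E1 E4 = 0 := by rw [E1_eq, E4_eq, symp_ofReal_ofReal]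
  have h23 : symp E2 E3 = 0 := by
    unfold E3
    rw [E2_eq, symp_I_mul_I_mul, symp_ofReal_ofReal]
  refine ⟨h21, h34, ?_, ?_, ?_, h31, h14, ?_, h23, ?_, h24, ?_⟩ <;>
    rw [symp_swap] <;> simp only [h21, h34, h31, h14, h23, h24, neg_zero]
end

section
/- Suppose b, w : ℝ → ℝ are C¹ and satisfy |b'(t)| ≤ |w(t)| and |w'(t)| ≤ h²|b(t)| for all t ≥ 0, where h > 0. Then for all t ≥ 0, |b(t)| ≤ √2 max(h|b(0)|, |w(0)|) e^{ht}/h and |w(t)| ≤ √2 max(h|b(0)|, |w(0)|) e^{ht}. -/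
/-!
The energy `E = h² b² + w²` satisfies `E' = 2 (h² b b' + w w') ≤ 4 h² |b| |w| ≤ 2 h E` by AM-GM,
so Grönwall gives `E t ≤ E 0 · e^{2ht} ≤ 2 M² e^{2ht}` with `M = max (h |b 0|) |w 0|`; both
`h |b t|` and `|w t|` are at most `√E t`.
-/

open Real Set

theorem le_mul_exp_of_deriv_le_mul {f f' : ℝ → ℝ} {K a b : ℝ} (hf : ContinuousOn f (Icc a b))
    (hf' : ∀ x ∈ Ico a b, HasDerivWithinAt f (f' x) (Ici x) x)
    (bound : ∀ x ∈ Ico a b, f' x ≤ K * f x) :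
    ∀ x ∈ Icc a b, f x ≤ f a * exp (K * (x - a)) := by
  intro x hx
  rw [← gronwallBound_ε0]
  exact le_gronwallBound_of_liminf_deriv_right_le hf
    (fun x hx _ hr => (hf' x hx).liminf_right_slope_le hr) le_rfl
    (fun x hx => by simpa using bound x hx) x hx

theorem sq_add_sq_le_two_mul_max_sq {a c : ℝ} (ha : 0 ≤ a) (hc : 0 ≤ c) :
    a ^ 2 + c ^ 2 ≤ 2 * max a c ^ 2 := by
  have := pow_le_pow_left₀ ha (le_max_left a c) 2
  have := pow_le_pow_left₀ hc (le_max_right a c) 2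
  linarith

def energy (h : ℝ) (b w : ℝ → ℝ) (t : ℝ) : ℝ := h ^ 2 * b t ^ 2 + w t ^ 2

namespace energy

variable {h : ℝ} {b w : ℝ → ℝ} {t : ℝ}

theorem hasDerivAt (hb : DifferentiableAt ℝ b t) (hw : DifferentiableAt ℝ w t) :
    HasDerivAt (energy h b w) (2 * (h ^ 2 * b t * deriv b t + w t * deriv w t)) t := by
  refine (((hb.hasDerivAt.fun_pow 2).const_mul (h ^ 2)).add
    (hw.hasDerivAt.fun_pow 2)).congr_deriv ?_
  push_cast
  ring

theorem abs_le_of_le_sq (hh : 0 ≤ h) {C : ℝ} (hC : 0 ≤ C) (hE : energy h b w t ≤ C ^ 2) :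
    h * |b t| ≤ C ∧ |w t| ≤ C := by
  unfold energy at hE
  constructor
  · rw [← abs_of_nonneg hh, ← abs_mul]
    exact abs_le_of_sq_le_sq (by nlinarith [sq_nonneg (w t)]) hC
  · exact abs_le_of_sq_le_sq (by nlinarith [sq_nonneg (h * b t)]) hC

theorem deriv_le (hh : 0 ≤ h) (hb' : |deriv b t| ≤ |w t|) (hw' : |deriv w t| ≤ h ^ 2 * |b t|) :
    2 * (h ^ 2 * b t * deriv b t + w t * deriv w t) ≤ 2 * h * energy h b w t := by
  have hbb' : b t * deriv b t ≤ |b t| * |w t| := calc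
    b t * deriv b t ≤ |b t| * |deriv b t| := (le_abs_self _).trans_eq (abs_mul _ _)
    _ ≤ |b t| * |w t| := by gcongr
  have hww' : w t * deriv w t ≤ |w t| * (h ^ 2 * |b t|) := calc
    w t * deriv w t ≤ |w t| * |deriv w t| := (le_abs_self _).trans_eq (abs_mul _ _)
    _ ≤ |w t| * (h ^ 2 * |b t|) := by gcongr
  have amgm : 2 * (h * |b t|) * |w t| ≤ (h * |b t|) ^ 2 + |w t| ^ 2 := two_mul_le_add_sq _ _
  rw [mul_pow, sq_abs, sq_abs] at amgm
  unfold energy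
  nlinarith [mul_le_mul_of_nonneg_left hbb' (sq_nonneg h), mul_le_mul_of_nonneg_left amgm hh]

theorem le_mul_exp (hh : 0 ≤ h) (hb : Differentiable ℝ b) (hw : Differentiable ℝ w)
    (hb' : ∀ s, 0 ≤ s → |deriv b s| ≤ |w s|) (hw' : ∀ s, 0 ≤ s → |deriv w s| ≤ h ^ 2 * |b s|)
    (ht : 0 ≤ t) : energy h b w t ≤ energy h b w 0 * exp (2 * h * t) := by
  have hE := fun s => hasDerivAt (h := h) (hb s) (hw s)
  simpa using le_mul_exp_of_deriv_le_mul (fun s _ => (hE s).continuousAt.continuousWithinAt)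
    (fun s _ => (hE s).hasDerivWithinAt)
    (fun s hs => deriv_le hh (hb' s hs.1) (hw' s hs.1)) t ⟨ht, le_rfl⟩

end energy

theorem gronwall_estimate (h : ℝ) (hh : 0 < h) (b w : ℝ → ℝ)
    (hb : ContDiff ℝ 1 b) (hw : ContDiff ℝ 1 w)
    (hb' : ∀ t, 0 ≤ t → |deriv b t| ≤ |w t|)
    (hw' : ∀ t, 0 ≤ t → |deriv w t| ≤ h^2 * |b t|) :
    ∀ t, 0 ≤ t →
      |b t| ≤ Real.sqrt 2 * max (h * |b 0|) (|w 0|) * Real.exp (h * t) / h ∧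
      |w t| ≤ Real.sqrt 2 * max (h * |b 0|) (|w 0|) * Real.exp (h * t) := by
  intro t ht
  set M := max (h * |b 0|) (|w 0|)
  have hE : energy h b w t ≤ (√2 * M * exp (h * t)) ^ 2 := calc
    energy h b w t ≤ energy h b w 0 * exp (2 * h * t) :=
      energy.le_mul_exp hh.le (hb.differentiable one_ne_zero) (hw.differentiable one_ne_zero)
        hb' hw' ht
    _ ≤ 2 * M ^ 2 * exp (2 * h * t) := by
      gcongr
      simpa [energy, mul_pow] using
        sq_add_sq_le_two_mul_max_sq (by positivity : 0 ≤ h * |b 0|) (abs_nonneg (w 0))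
    _ = (√2 * M * exp (h * t)) ^ 2 := by
      rw [mul_pow, mul_pow, sq_sqrt zero_le_two, ← exp_nat_mul]
      ring_nf
  obtain ⟨hbt, hwt⟩ := energy.abs_le_of_le_sq hh.le (by positivity) hE
  exact ⟨(le_div_iff₀ hh).2 (by linarith), hwt⟩
end
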